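/- Let g:[0,1]→ℝ^d be a rectifiable curve with 0 < 𝓛(g) < ∞ and ℋ¹(Im g) = 𝓛(g). Then for every subdivision a_0 = 0 < a_1 < … < a_n = 1 and every 1 ≤ i ≤ n, one has 𝓛(g|_{(a_{i−1}, a_i)}) = ℋ¹(g((a_{i−1}, a_i))). -/

import Mathlib

/-!
The variations of `g` on the open pieces `(a i, a (i+1))` add up to at most the variation on
`[0, 1]`, which is `ℋ¹(g [0, 1])`. Up to the finitely many (hence `ℋ¹`-null) points `g (a i)`, the
image `g [0, 1]` is covered by the images of the pieces, so `ℋ¹(g [0, 1])` is at most the sum of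
their measures. Each piece satisfies `ℋ¹(g I) ≤ Var(g, I)`, because `g` factors through its
arc-length parametrization, which is 1-Lipschitz on an interval of length `Var(g, I)`. Hence
`∑ Var ≤ ∑ ℋ¹` while `ℋ¹ ≤ Var` termwise, and as the sums are finite every term is an equality.
-/

open MeasureTheory Filter
open scoped ENNReal NNReal InnerProductSpace Topology

open Set Metric

theorem ENNReal.eq_of_sum_le_sum_of_le {ι : Type*} {s : Finset ι} {f g : ι → ℝ≥0∞}
    (hgf : ∀ i ∈ s, g i ≤ f i) (hfg : ∑ i ∈ s, f i ≤ ∑ i ∈ s, g i) (hf : ∑ i ∈ s, f i ≠ ∞)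
    {i : ι} (hi : i ∈ s) : f i = g i := by
  classical
  refine le_antisymm ?_ (hgf i hi)
  have hrest : ∑ j ∈ s.erase i, f j ≠ ∞ :=
    ne_top_of_le_ne_top hf (Finset.sum_le_sum_of_subset (s.erase_subset i))
  refine (ENNReal.add_le_add_iff_right hrest).1 ?_
  calc f i + ∑ j ∈ s.erase i, f j = ∑ j ∈ s, f j := Finset.add_sum_erase s f hi
    _ ≤ ∑ j ∈ s, g j := hfg
    _ = g i + ∑ j ∈ s.erase i, g j := (Finset.add_sum_erase s g hi).symm
    _ ≤ g i + ∑ j ∈ s.erase i, f j := by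
      gcongr with j hj
      exact hgf j (Finset.mem_of_mem_erase hj)

theorem Monotone.Icc_subset_biUnion_Ioo_union_image {α : Type*} [LinearOrder α] {a : ℕ → α}
    (ha : Monotone a) (n : ℕ) :
    Icc (a 0) (a n) ⊆ (⋃ i ∈ Finset.range n, Ioo (a i) (a (i + 1))) ∪ a '' Iic n := by
  intro x hx
  rcases eq_or_lt_of_le hx.1 with rfl | hx0
  · exact Or.inr ⟨0, Nat.zero_le n, rfl⟩
  have : x ∈ ⋃ i ∈ Ico 0 n, Ioc (a i) (a (Order.succ i)) := by
    rw [ha.biUnion_Ico_Ioc_map_succ]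
    exact ⟨hx0, hx.2⟩
  simp only [mem_iUnion, Order.succ_eq_add_one, mem_Ico] at this
  obtain ⟨i, ⟨-, hi⟩, hxi, hxi'⟩ := this
  rcases eq_or_lt_of_le hxi' with rfl | hxi'
  · exact Or.inr ⟨i + 1, hi, rfl⟩
  · exact Or.inl (mem_biUnion (Finset.mem_range.2 hi) ⟨hxi, hxi'⟩)

theorem measure_image_Icc_le_sum_measure_image_Ioo {α E : Type*} [LinearOrder α]
    [MeasurableSpace E] (μ : Measure E) [NullSingletonClass μ] (g : α → E) {a : ℕ → α}
    (ha : Monotone a) (n : ℕ) :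
    μ (g '' Icc (a 0) (a n)) ≤ ∑ i ∈ Finset.range n, μ (g '' Ioo (a i) (a (i + 1))) := by
  calc μ (g '' Icc (a 0) (a n))
      ≤ μ ((⋃ i ∈ Finset.range n, g '' Ioo (a i) (a (i + 1))) ∪ g '' (a '' Iic n)) := by
        rw [← image_iUnion₂, ← image_union]
        exact measure_mono (image_mono (ha.Icc_subset_biUnion_Ioo_union_image n))
    _ ≤ μ (⋃ i ∈ Finset.range n, g '' Ioo (a i) (a (i + 1))) + μ (g '' (a '' Iic n)) :=
        measure_union_le _ _
    _ = μ (⋃ i ∈ Finset.range n, g '' Ioo (a i) (a (i + 1))) := by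
        rw [(((finite_Iic n).image a).image g).measure_zero μ, add_zero]
    _ ≤ ∑ i ∈ Finset.range n, μ (g '' Ioo (a i) (a (i + 1))) := measure_biUnion_finset_le _ _

section Variation

variable {E : Type*} [EMetricSpace E]

theorem HasConstantSpeedOnWith.lipschitzOnWith {f : ℝ → E} {s : Set ℝ} {l : ℝ≥0}
    (h : HasConstantSpeedOnWith f s l) : LipschitzOnWith l f s := by
  suffices key : ∀ x ∈ s, ∀ y ∈ s, x ≤ y → edist (f x) (f y) ≤ l * edist x y by
    intro x hx y hy
    rcases le_total x y with hxy | hyx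
    · exact key x hx y hy hxy
    · rw [edist_comm, edist_comm x]; exact key y hy x hx hyx
  intro x hx y hy hxy
  calc edist (f x) (f y) ≤ eVariationOn f (s ∩ Icc x y) :=
        eVariationOn.edist_le f ⟨hx, le_rfl, hxy⟩ ⟨hy, hxy, le_rfl⟩
    _ = l * edist x y := by
      rw [h hx hy, ENNReal.ofReal_mul l.coe_nonneg, ENNReal.ofReal_coe_nnreal, edist_comm,
        edist_dist, Real.dist_eq, abs_of_nonneg (sub_nonneg.2 hxy)]

theorem HasUnitSpeedOn.ediam_le_eVariationOn {f : ℝ → E} {s : Set ℝ} (h : HasUnitSpeedOn f s) :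
    ediam s ≤ eVariationOn f s := by
  suffices key : ∀ x ∈ s, ∀ y ∈ s, x ≤ y → edist x y ≤ eVariationOn f s by
    refine ediam_le fun x hx y hy => ?_
    rcases le_total x y with hxy | hyx
    · exact key x hx y hy hxy
    · rw [edist_comm]; exact key y hy x hx hyx
  intro x hx y hy hxy
  calc edist x y = eVariationOn f (s ∩ Icc x y) := by
        rw [h hx hy, NNReal.coe_one, one_mul, edist_comm, edist_dist, Real.dist_eq,
          abs_of_nonneg (sub_nonneg.2 hxy)]
    _ ≤ eVariationOn f s := eVariationOn.mono f inter_subset_left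

variable [MeasurableSpace E] [BorelSpace E]

theorem hausdorffMeasure_image_le_eVariationOn (g : ℝ → E) (s : Set ℝ) :
    μH[1] (g '' s) ≤ eVariationOn g s := by
  rcases eq_or_ne (eVariationOn g s) ∞ with h | h
  · simp [h]
  rcases s.eq_empty_or_nonempty with rfl | ⟨c, hc⟩
  · simp
  have hg : LocallyBoundedVariationOn g s := BoundedVariationOn.locallyBoundedVariationOn h
  set φ := variationOnFromTo g s c
  set γ := naturalParameterization g s c
  have hγ : HasUnitSpeedOn γ (φ '' s) := has_unit_speed_naturalParameterization g hg hc
  have hγφ : ∀ x ∈ s, edist (γ (φ x)) (g x) = 0 := fun x hx =>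
    edist_naturalParameterization_eq_zero hg hc hx
  calc μH[1] (g '' s) = μH[1] (γ '' (φ '' s)) := by
        rw [image_image]
        exact congrArg _ (image_congr fun x hx => (edist_eq_zero.1 (hγφ x hx)).symm)
    _ ≤ μH[1] (φ '' s) := by
        simpa using hγ.lipschitzOnWith.hausdorffMeasure_image_le zero_le_one
    _ ≤ ediam (φ '' s) := by
        rw [hausdorffMeasure_real]
        exact Real.volume_le_diam _
    _ ≤ eVariationOn γ (φ '' s) := hγ.ediam_le_eVariationOn
    _ = eVariationOn g s := by
        rw [← eVariationOn.comp_eq_of_monotoneOn γ φ (variationOnFromTo.monotoneOn hg hc)]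
        exact eVariationOn.eq_of_edist_zero_on hγφ

theorem eVariationOn_Ioo_eq_hausdorffMeasure_image (g : ℝ → E) {a : ℕ → ℝ} (ha : Monotone a)
    {n : ℕ} (hfin : eVariationOn g (Icc (a 0) (a n)) ≠ ∞)
    (hlen : μH[1] (g '' Icc (a 0) (a n)) = eVariationOn g (Icc (a 0) (a n)))
    {i : ℕ} (hi : i < n) :
    eVariationOn g (Ioo (a i) (a (i + 1))) = μH[1] (g '' Ioo (a i) (a (i + 1))) := by
  have := Measure.nullSingletonClass_hausdorff E one_pos
  have hsum : ∑ j ∈ Finset.range n, eVariationOn g (Ioo (a j) (a (j + 1))) ≤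
      eVariationOn g (Icc (a 0) (a n)) := by
    rw [← eVariationOn.sum' g ha]
    exact Finset.sum_le_sum fun j _ => eVariationOn.mono g Ioo_subset_Icc_self
  refine ENNReal.eq_of_sum_le_sum_of_le (fun j _ => hausdorffMeasure_image_le_eVariationOn g _)
    ?_ (ne_top_of_le_ne_top hfin hsum) (Finset.mem_range.2 hi)
  calc ∑ j ∈ Finset.range n, eVariationOn g (Ioo (a j) (a (j + 1)))
      ≤ μH[1] (g '' Icc (a 0) (a n)) := hlen ▸ hsum
    _ ≤ ∑ j ∈ Finset.range n, μH[1] (g '' Ioo (a j) (a (j + 1))) :=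
        measure_image_Icc_le_sum_measure_image_Ioo _ g ha n

end Variation

theorem statement_12_general {d : ℕ}
    (g : ℝ → EuclideanSpace ℝ (Fin d))
    (hrect : eVariationOn g (Set.Icc 0 1) ≠ ⊤)
    (hlen : μH[1] (g '' Set.Icc 0 1) = eVariationOn g (Set.Icc 0 1))
    (n : ℕ) (a : ℕ → ℝ) (ha0 : a 0 = 0) (han : a n = 1)
    (hmono : ∀ i < n, a i < a (i + 1)) :
    ∀ i < n, eVariationOn g (Set.Ioo (a i) (a (i + 1))) =
      μH[1] (g '' Set.Ioo (a i) (a (i + 1))) := by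
  intro i hi
  -- `a` is only ordered up to `n`; freeze it from there on to get a monotone sequence.
  set b : ℕ → ℝ := fun j => a (min j n)
  have hb : Monotone b := monotone_nat_of_le_succ fun j => by
    rcases lt_or_ge j n with hj | hj
    · simpa [b, hj.le, Nat.succ_le_of_lt hj] using (hmono j hj).le
    · simp [b, hj, hj.trans j.le_succ]
  have hbi : ∀ j ≤ n, b j = a j := fun j hj => by simp [b, hj]
  have hIcc : Icc (b 0) (b n) = Icc 0 1 := by rw [hbi 0 n.zero_le, hbi n le_rfl, ha0, han]
  have := eVariationOn_Ioo_eq_hausdorffMeasure_image g hb (hIcc ▸ hrect) (hIcc ▸ hlen) hi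
  rwa [hbi i hi.le, hbi (i + 1) hi] at this

/-- For a rectifiable curve `g : [0,1] → ℝ^d` with
`0 < 𝓛(g) < ∞` and `ℋ¹(Im g) = 𝓛(g)`, for any subdivision
`a 0 = 0 < a 1 < … < a n = 1` and any `1 ≤ i ≤ n`, the length of the restriction
of `g` to `(a (i-1), a i)` equals `ℋ¹(g ((a (i-1), a i)))`. -/
theorem statement_12 {d : ℕ}
    (g : ℝ → EuclideanSpace ℝ (Fin d)) (hg : ContinuousOn g (Set.Icc 0 1))
    (hpos : eVariationOn g (Set.Icc 0 1) ≠ 0)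
    (hrect : eVariationOn g (Set.Icc 0 1) ≠ ⊤)
    (hlen : μH[1] (g '' Set.Icc 0 1) = eVariationOn g (Set.Icc 0 1))
    (n : ℕ) (hn : 0 < n) (a : ℕ → ℝ) (ha0 : a 0 = 0) (han : a n = 1)
    (hmono : ∀ i < n, a i < a (i + 1)) :
    ∀ i < n, eVariationOn g (Set.Ioo (a i) (a (i + 1))) =
      μH[1] (g '' Set.Ioo (a i) (a (i + 1))) :=
  statement_12_general g hrect hlen n a ha0 han hmono
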